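/- arXiv:2107.14192 — 2 statements merged into one kernel-verified Lean document; each statement's English description precedes it below -/
import Mathlib

section
/- Let C, K be n×n complex matrices, let Λ1, Λ2 be diagonal n×n matrices with Λ2 − Λ1 invertible, and let V1, V2 be n×n matrices satisfying V1·Λ1² + C·V1·Λ1 + K·V1 = 0 and V2·Λ2² + C·V2·Λ2 + K·V2 = 0. Define T1 := (V1·Λ2 − V2·Λ1)·(Λ2 − Λ1)⁻¹, T2 := (V2 − V1)·(Λ2 − Λ1)⁻¹, T3 := (V1 − V2)·(Λ1·Λ2)·(Λ2 − Λ1)⁻¹, T4 := (V2·Λ2 − V1·Λ1)·(Λ2 − Λ1)⁻¹, and set D := −(Λ1 + Λ2), B := Λ1·Λ2. Then the four compatibility identities T3 = −T2·B, T1 = T4 + T2·D, T4·D = T3 + C·T4 + K·T2, and T4·B = C·T3 + K·T1 all hold. -/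
lemma isDiag_commute {n : ℕ} {A B : Matrix (Fin n) (Fin n) ℂ}
    (hA : A.IsDiag) (hB : B.IsDiag) : A * B = B * A := by
  ext i j
  rw [Matrix.mul_apply, Matrix.mul_apply,
    Finset.sum_eq_single i (fun k _ hk => by rw [hA (Ne.symm hk), zero_mul]) (by simp),
    Finset.sum_eq_single i (fun k _ hk => by rw [hB (Ne.symm hk), zero_mul]) (by simp)]
  rcases eq_or_ne i j with rfl | h
  · exact mul_comm _ _
  · simp [hA h, hB h]

lemma commute_nonsing_inv {n : ℕ} {A S : Matrix (Fin n) (Fin n) ℂ}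
    (h : A * S = S * A) (hS : IsUnit S.det) : S⁻¹ * A = A * S⁻¹ := by
  have := congrArg (fun X => S⁻¹ * X * S⁻¹) h
  simpa [Matrix.mul_assoc, Matrix.nonsing_inv_mul_cancel_right _ _ hS,
    Matrix.mul_nonsing_inv_cancel_right _ _ hS,
    ← Matrix.mul_assoc, Matrix.nonsing_inv_mul_cancel_left _ _ hS,
    Matrix.mul_nonsing_inv_cancel_left _ _ hS] using this

/-- The explicit phase-synchronization matrices `T1, T2, T3, T4`
built from solutions `V1, V2` (with diagonal eigenvalue matrices `Λ1, Λ2`,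
`Λ2 − Λ1` invertible) of the quadratic eigenvalue problem satisfy the four
compatibility identities with `D := −(Λ1 + Λ2)` and `B := Λ1·Λ2`. -/
theorem stmt6 {n : ℕ} (C K Λ1 Λ2 V1 V2 : Matrix (Fin n) (Fin n) ℂ)
    (hΛ1 : Λ1.IsDiag) (hΛ2 : Λ2.IsDiag) (hinv : IsUnit (Λ2 - Λ1))
    (hV1 : V1 * Λ1 ^ 2 + C * V1 * Λ1 + K * V1 = 0)
    (hV2 : V2 * Λ2 ^ 2 + C * V2 * Λ2 + K * V2 = 0) :
    let T1 := (V1 * Λ2 - V2 * Λ1) * (Λ2 - Λ1)⁻¹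
    let T2 := (V2 - V1) * (Λ2 - Λ1)⁻¹
    let T3 := (V1 - V2) * (Λ1 * Λ2) * (Λ2 - Λ1)⁻¹
    let T4 := (V2 * Λ2 - V1 * Λ1) * (Λ2 - Λ1)⁻¹
    let D := -(Λ1 + Λ2)
    let B := Λ1 * Λ2
    T3 = -(T2 * B) ∧ T1 = T4 + T2 * D ∧
      T4 * D = T3 + C * T4 + K * T2 ∧ T4 * B = C * T3 + K * T1 := by
  intro T1 T2 T3 T4 D B
  have hdet : IsUnit (Λ2 - Λ1).det := (Matrix.isUnit_iff_isUnit_det _).mp hinv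
  have hc : Λ1 * Λ2 = Λ2 * Λ1 := isDiag_commute hΛ1 hΛ2
  have hcA : ∀ A : Matrix (Fin n) (Fin n) ℂ, A * Λ1 * Λ2 = A * Λ2 * Λ1 := fun A => by
    rw [Matrix.mul_assoc, hc, Matrix.mul_assoc]
  have hi1 : (Λ2 - Λ1)⁻¹ * Λ1 = Λ1 * (Λ2 - Λ1)⁻¹ :=
    commute_nonsing_inv (by noncomm_ring [hc]) hdet
  have hi2 : (Λ2 - Λ1)⁻¹ * Λ2 = Λ2 * (Λ2 - Λ1)⁻¹ :=
    commute_nonsing_inv (by noncomm_ring [hc]) hdet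
  have hA1 : ∀ A : Matrix (Fin n) (Fin n) ℂ, A * (Λ2 - Λ1)⁻¹ * Λ1 = A * Λ1 * (Λ2 - Λ1)⁻¹ :=
    fun A => by rw [Matrix.mul_assoc, hi1, Matrix.mul_assoc]
  have hA2 : ∀ A : Matrix (Fin n) (Fin n) ℂ, A * (Λ2 - Λ1)⁻¹ * Λ2 = A * Λ2 * (Λ2 - Λ1)⁻¹ :=
    fun A => by rw [Matrix.mul_assoc, hi2, Matrix.mul_assoc]
  have hK1 : K * V1 = -(V1 * (Λ1 * Λ1) + C * V1 * Λ1) := by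
    linear_combination (norm := noncomm_ring) hV1
  have hK2 : K * V2 = -(V2 * (Λ2 * Λ2) + C * V2 * Λ2) := by
    linear_combination (norm := noncomm_ring) hV2
  refine ⟨?_, ?_, ?_, ?_⟩ <;>
  · show _ = _
    simp only [T1, T2, T3, T4, D, B, Matrix.mul_sub, Matrix.sub_mul, Matrix.mul_add,
      Matrix.add_mul, Matrix.mul_neg, Matrix.neg_mul, ← Matrix.mul_assoc,
      hK1, hK2, hi1, hi2, hA1, hA2, hc, hcA]
    abel
end

section
/- Let C, K be real n×n matrices, let Λ1, Λ2 be diagonal real n×n matrices with Λ2 − Λ1 invertible, and let V1, V2 be real n×n matrices satisfying V1·Λ1² + C·V1·Λ1 + K·V1 = 0 and V2·Λ2² + C·V2·Λ2 + K·V2 = 0. Define T1 := (V1·Λ2 − V2·Λ1)·(Λ2 − Λ1)⁻¹, T2 := (V2 − V1)·(Λ2 − Λ1)⁻¹, T3 := (V1 − V2)·(Λ1·Λ2)·(Λ2 − Λ1)⁻¹, T4 := (V2·Λ2 − V1·Λ1)·(Λ2 − Λ1)⁻¹, and set D := −(Λ1 + Λ2), B := Λ1·Λ2. Then for every twice differentiable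 curve p : ℝ → ℝⁿ satisfying the decoupled system p'' + D·p' + B·p = 0, the curve q := T1·p + T2·p' satisfies q' = T3·p + T4·p' and solves the original system q'' + C·q' + K·q = 0. -/
/-!
Writing `S := Λ₂ - Λ₁`, every `Tᵢ` has the form `Nᵢ * S⁻¹`, and `S⁻¹` commutes with the
diagonal matrices `Λ₁ + Λ₂` and `Λ₁ * Λ₂`. Along a solution of `p'' + D p' + B p = 0`, the
observable `P p + Q p'` has derivative `-(Q B) p + (P - Q D) p'`, so every claim reduces to
an identity between the numerators `Nᵢ` multiplied on the right by `S⁻¹`. These identities are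
linear combinations of the two quadratic eigen-equations `Vⱼ Λⱼ² + C Vⱼ Λⱼ + K Vⱼ = 0`.
-/

open Matrix

theorem HasDerivAt.matrix_mulVec {𝕜 m ι : Type*} [NontriviallyNormedField 𝕜] [Fintype m]
    [Fintype ι] (T : Matrix m ι 𝕜) {f : 𝕜 → ι → 𝕜} {f' : ι → 𝕜} {t : 𝕜}
    (hf : HasDerivAt f f' t) : HasDerivAt (fun s => T *ᵥ f s) (T *ᵥ f') t :=
  (ContinuousLinearMap.mk T.mulVecLin
    (continuous_const.matrix_mulVec continuous_id)).hasFDerivAt.comp_hasDerivAt t hf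

namespace Matrix

variable {ι R : Type*} [Fintype ι]

theorem mulVec_add_mulVec_of_add_add_eq_zero {m : Type*} [CommRing R] (P Q : Matrix m ι R)
    {D B : Matrix ι ι R} {x x' x'' : ι → R} (h : x'' + D *ᵥ x' + B *ᵥ x = 0) :
    P *ᵥ x' + Q *ᵥ x'' = -(Q * B) *ᵥ x + (P - Q * D) *ᵥ x' := by
  rw [eq_sub_of_add_eq (eq_neg_of_add_eq_zero_left h)]
  simp only [mulVec_sub, mulVec_neg, neg_mulVec, sub_mulVec, mulVec_mulVec]
  abel

variable [DecidableEq ι]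

theorem IsDiag.commute [CommSemiring R] {A B : Matrix ι ι R} (hA : A.IsDiag)
    (hB : B.IsDiag) : Commute A B := by
  rw [← hA.diagonal_diag, ← hB.diagonal_diag]
  exact commute_diagonal _ _

variable [CommRing R]

/-- Holds for singular `S` too, where `S⁻¹ = 0`. -/
theorem commute_nonsing_inv_right {M S : Matrix ι ι R} (h : Commute M S) : Commute M S⁻¹ := by
  simpa only [zpow_neg_one] using Matrix.Commute.zpow_right h (-1)

theorem mul_nonsing_inv_mul_of_commute {m : Type*} (X : Matrix m ι R) {M S : Matrix ι ι R}
    (h : Commute M S) : X * S⁻¹ * M = X * M * S⁻¹ := by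
  rw [Matrix.mul_assoc, ← (commute_nonsing_inv_right h).eq, Matrix.mul_assoc]

end Matrix

theorem Commute.mul_commute_sub {A : Type*} [Ring A] {a b : A} (h : Commute a b) :
    Commute (a * b) (b - a) :=
  (h.sub_right (.refl _)).mul_left ((Commute.refl _).sub_right h.symm)

theorem Commute.neg_add_commute_sub {A : Type*} [Ring A] {a b : A} (h : Commute a b) :
    Commute (-(a + b)) (b - a) :=
  ((h.sub_right (.refl _)).add_left ((Commute.refl _).sub_right h.symm)).neg_left

section PhaseSynchronization

variable {ι R : Type*} [Fintype ι] [DecidableEq ι] [CommRing R]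
  {C K Λ₁ Λ₂ V₁ V₂ : Matrix ι ι R} (hΛ : Commute Λ₁ Λ₂)
include hΛ

theorem transfer_deriv_position_coeff :
    -((V₂ - V₁) * (Λ₂ - Λ₁)⁻¹ * (Λ₁ * Λ₂)) = (V₁ - V₂) * (Λ₁ * Λ₂) * (Λ₂ - Λ₁)⁻¹ := by
  rw [mul_nonsing_inv_mul_of_commute _ hΛ.mul_commute_sub, ← neg_mul]
  congr 1
  noncomm_ring

theorem transfer_deriv_velocity_coeff :
    (V₁ * Λ₂ - V₂ * Λ₁) * (Λ₂ - Λ₁)⁻¹ - (V₂ - V₁) * (Λ₂ - Λ₁)⁻¹ * -(Λ₁ + Λ₂)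
      = (V₂ * Λ₂ - V₁ * Λ₁) * (Λ₂ - Λ₁)⁻¹ := by
  rw [mul_nonsing_inv_mul_of_commute _ hΛ.neg_add_commute_sub, ← sub_mul]
  congr 1
  noncomm_ring

variable (hV₁ : V₁ * Λ₁ ^ 2 + C * V₁ * Λ₁ + K * V₁ = 0)
  (hV₂ : V₂ * Λ₂ ^ 2 + C * V₂ * Λ₂ + K * V₂ = 0)
include hV₁ hV₂

theorem transfer_position_coeff_eq_zero :
    -((V₂ * Λ₂ - V₁ * Λ₁) * (Λ₂ - Λ₁)⁻¹ * (Λ₁ * Λ₂))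
      + C * ((V₁ - V₂) * (Λ₁ * Λ₂) * (Λ₂ - Λ₁)⁻¹) + K * ((V₁ * Λ₂ - V₂ * Λ₁) * (Λ₂ - Λ₁)⁻¹)
      = 0 := by
  rw [mul_nonsing_inv_mul_of_commute _ hΛ.mul_commute_sub, ← Matrix.mul_assoc C,
    ← Matrix.mul_assoc K, ← neg_mul, ← add_mul, ← add_mul]
  convert zero_mul (Λ₂ - Λ₁)⁻¹ using 2
  linear_combination (norm := noncomm_ring) hV₁ * Λ₂ - hV₂ * Λ₁ - V₂ * Λ₂ * hΛ.eq - C * V₂ * hΛ.eq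

theorem transfer_velocity_coeff_eq_zero :
    (V₁ - V₂) * (Λ₁ * Λ₂) * (Λ₂ - Λ₁)⁻¹ - (V₂ * Λ₂ - V₁ * Λ₁) * (Λ₂ - Λ₁)⁻¹ * -(Λ₁ + Λ₂)
      + C * ((V₂ * Λ₂ - V₁ * Λ₁) * (Λ₂ - Λ₁)⁻¹) + K * ((V₂ - V₁) * (Λ₂ - Λ₁)⁻¹) = 0 := by
  rw [mul_nonsing_inv_mul_of_commute _ hΛ.neg_add_commute_sub, ← Matrix.mul_assoc C,
    ← Matrix.mul_assoc K, ← sub_mul, ← add_mul, ← add_mul]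
  convert zero_mul (Λ₂ - Λ₁)⁻¹ using 2
  linear_combination (norm := noncomm_ring) hV₂ - hV₁ - V₂ * hΛ.eq

end PhaseSynchronization

theorem stmt16_general {n : ℕ} (C K Λ1 Λ2 V1 V2 : Matrix (Fin n) (Fin n) ℝ)
    (hΛ1 : Λ1.IsDiag) (hΛ2 : Λ2.IsDiag)
    (hV1 : V1 * Λ1 ^ 2 + C * V1 * Λ1 + K * V1 = 0)
    (hV2 : V2 * Λ2 ^ 2 + C * V2 * Λ2 + K * V2 = 0) :
    let T1 := (V1 * Λ2 - V2 * Λ1) * (Λ2 - Λ1)⁻¹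
    let T2 := (V2 - V1) * (Λ2 - Λ1)⁻¹
    let T3 := (V1 - V2) * (Λ1 * Λ2) * (Λ2 - Λ1)⁻¹
    let T4 := (V2 * Λ2 - V1 * Λ1) * (Λ2 - Λ1)⁻¹
    let D := -(Λ1 + Λ2)
    let B := Λ1 * Λ2
    ∀ p p' p'' : ℝ → Fin n → ℝ,
      (∀ t, HasDerivAt p (p' t) t) →
      (∀ t, HasDerivAt p' (p'' t) t) →
      (∀ t, p'' t + D.mulVec (p' t) + B.mulVec (p t) = 0) →
      (∀ t, HasDerivAt (fun s => T1.mulVec (p s) + T2.mulVec (p' s))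
          (T3.mulVec (p t) + T4.mulVec (p' t)) t) ∧
      (∀ t, HasDerivAt (fun s => T3.mulVec (p s) + T4.mulVec (p' s))
          (T3.mulVec (p' t) + T4.mulVec (p'' t)) t) ∧
      (∀ t, (T3.mulVec (p' t) + T4.mulVec (p'' t))
          + C.mulVec (T3.mulVec (p t) + T4.mulVec (p' t))
          + K.mulVec (T1.mulVec (p t) + T2.mulVec (p' t)) = 0) := by
  intro T1 T2 T3 T4 D B p p' p'' hp hp' hode
  have hΛ := hΛ1.commute hΛ2
  have hq'_pos : -(T2 * B) = T3 := transfer_deriv_position_coeff hΛ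
  have hq'_vel : T1 - T2 * D = T4 := transfer_deriv_velocity_coeff hΛ
  have hpos : -(T4 * B) + C * T3 + K * T1 = 0 := transfer_position_coeff_eq_zero hΛ hV1 hV2
  have hvel : T3 - T4 * D + C * T4 + K * T2 = 0 := transfer_velocity_coeff_eq_zero hΛ hV1 hV2
  have hq' : ∀ t, T1 *ᵥ p' t + T2 *ᵥ p'' t = T3 *ᵥ p t + T4 *ᵥ p' t := fun t => by
    rw [mulVec_add_mulVec_of_add_add_eq_zero _ _ (hode t), hq'_pos, hq'_vel]
  refine ⟨fun t => hq' t ▸ ((hp t).matrix_mulVec T1).add ((hp' t).matrix_mulVec T2),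
    fun t => ((hp t).matrix_mulVec T3).add ((hp' t).matrix_mulVec T4), fun t => ?_⟩
  calc _ = (-(T4 * B) + C * T3 + K * T1) *ᵥ p t + (T3 - T4 * D + C * T4 + K * T2) *ᵥ p' t := by
        rw [mulVec_add_mulVec_of_add_add_eq_zero _ _ (hode t)]
        simp only [add_mulVec, sub_mulVec, mulVec_add, mulVec_mulVec]
        abel
    _ = 0 := by rw [hpos, hvel, zero_mulVec, zero_mulVec, add_zero]

/-- Main solution-transfer statement of phase synchronization: with
real diagonal `Λ1, Λ2` (`Λ2 − Λ1` invertible) and real `V1, V2` solving the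
quadratic matrix equations, the explicit matrices `T1, …, T4` carry every solution
`p` of the decoupled system `p'' + D·p' + B·p = 0` (with `D = −(Λ1+Λ2)`,
`B = Λ1·Λ2`) to a curve `q := T1·p + T2·p'` with `q' = T3·p + T4·p'` solving
`q'' + C·q' + K·q = 0`. -/
theorem stmt16 {n : ℕ} (C K Λ1 Λ2 V1 V2 : Matrix (Fin n) (Fin n) ℝ)
    (hΛ1 : Λ1.IsDiag) (hΛ2 : Λ2.IsDiag) (hinv : IsUnit (Λ2 - Λ1))
    (hV1 : V1 * Λ1 ^ 2 + C * V1 * Λ1 + K * V1 = 0)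
    (hV2 : V2 * Λ2 ^ 2 + C * V2 * Λ2 + K * V2 = 0) :
    let T1 := (V1 * Λ2 - V2 * Λ1) * (Λ2 - Λ1)⁻¹
    let T2 := (V2 - V1) * (Λ2 - Λ1)⁻¹
    let T3 := (V1 - V2) * (Λ1 * Λ2) * (Λ2 - Λ1)⁻¹
    let T4 := (V2 * Λ2 - V1 * Λ1) * (Λ2 - Λ1)⁻¹
    let D := -(Λ1 + Λ2)
    let B := Λ1 * Λ2
    ∀ p p' p'' : ℝ → Fin n → ℝ,
      (∀ t, HasDerivAt p (p' t) t) →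
      (∀ t, HasDerivAt p' (p'' t) t) →
      (∀ t, p'' t + D.mulVec (p' t) + B.mulVec (p t) = 0) →
      (∀ t, HasDerivAt (fun s => T1.mulVec (p s) + T2.mulVec (p' s))
          (T3.mulVec (p t) + T4.mulVec (p' t)) t) ∧
      (∀ t, HasDerivAt (fun s => T3.mulVec (p s) + T4.mulVec (p' s))
          (T3.mulVec (p' t) + T4.mulVec (p'' t)) t) ∧
      (∀ t, (T3.mulVec (p' t) + T4.mulVec (p'' t))
          + C.mulVec (T3.mulVec (p t) + T4.mulVec (p' t))
          + K.mulVec (T1.mulVec (p t) + T2.mulVec (p' t)) = 0) :=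
  stmt16_general C K Λ1 Λ2 V1 V2 hΛ1 hΛ2 hV1 hV2
end
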